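/- arXiv:2510.05231 — 6 statements merged into one kernel-verified Lean document; each statement's English description precedes it below -/
import Mathlib

section
/- Let X ⊆ P^N be an irreducible projective variety such that no Hadamard power X^{⋆m} equals P^N. If 𝟙 ∈ X, then there exists r ≥ 1 such that X^{⋆r} is a proper Hadamard-idempotent subvariety of P^N, i.e., (X^{⋆r})^{⋆2} = X^{⋆r} ≠ P^N. -/
/-- The Zariski closure of a subset of affine space `ℂ^n`: the set of points on which every
polynomial vanishing identically on `S` vanishes. -/
def zariskiClosure {n : ℕ} (S : Set (Fin n → ℂ)) : Set (Fin n → ℂ) :=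
  {x | ∀ p : MvPolynomial (Fin n) ℂ, (∀ y ∈ S, MvPolynomial.eval y p = 0) →
    MvPolynomial.eval x p = 0}

/-- A set is Zariski closed if it equals its Zariski closure. -/
def IsZariskiClosed {n : ℕ} (S : Set (Fin n → ℂ)) : Prop :=
  zariskiClosure S = S

/-- Irreducibility with respect to the Zariski topology. -/
def ZariskiIrreducible {n : ℕ} (S : Set (Fin n → ℂ)) : Prop :=
  S.Nonempty ∧ ∀ C₁ C₂ : Set (Fin n → ℂ), IsZariskiClosed C₁ → IsZariskiClosed C₂ →
    S ⊆ C₁ ∪ C₂ → S ⊆ C₁ ∨ S ⊆ C₂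

/-- The Hadamard product of two subsets (affine cones over projective varieties): the Zariski
closure of the set of coordinatewise products `x ⋆ y` which are defined (i.e. nonzero). -/
def hadamardSetProd {n : ℕ} (X Y : Set (Fin n → ℂ)) : Set (Fin n → ℂ) :=
  zariskiClosure {z | ∃ x ∈ X, ∃ y ∈ Y, z = x * y ∧ x * y ≠ 0}

/-- Hadamard powers: `X^{⋆1} = X` and `X^{⋆(m+1)} = X ⋆ X^{⋆m}`. -/
def hadamardPow {n : ℕ} (X : Set (Fin n → ℂ)) : ℕ → Set (Fin n → ℂ)
  | 0 => {1}
  | 1 => X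
  | (m + 2) => hadamardSetProd X (hadamardPow X (m + 1))

/-! The Hadamard powers `X^{⋆m}` (`m ≥ 1`) form an increasing chain of closed irreducible sets:
`X^{⋆m} ⊆ X^{⋆m} ⋆ X` because `𝟙 ∈ X`, and a Hadamard product of irreducible sets is irreducible,
being the closure of the image of `A × B` under multiplication. Their vanishing ideals are
therefore a decreasing chain of prime ideals of `ℂ[x₀, …, x_N]`, which must stabilise because
this ring has finite Krull dimension. Once `X^{⋆(r+1)} = X^{⋆r}`, all higher powers agree, so
`X^{⋆r} ⋆ X^{⋆r} = X^{⋆2r} = X^{⋆r}`. -/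

open MvPolynomial Pointwise

lemma Set.mul_sdiff_zero_sdiff_zero {M : Type*} [MulZeroClass M] (A B : Set M) :
    (A * (B \ {0})) \ {0} = (A * B) \ {0} := by
  refine (Set.sdiff_subset_sdiff_left (Set.mul_subset_mul_left Set.sdiff_subset)).antisymm ?_
  rintro _ ⟨⟨a, ha, b, hb, rfl⟩, hab⟩
  refine ⟨⟨a, ha, b, ⟨hb, ?_⟩, rfl⟩, hab⟩
  rintro rfl
  exact hab (mul_zero a)

lemma Set.sdiff_zero_mul_sdiff_zero {M : Type*} [MulZeroClass M] (A B : Set M) :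
    ((A \ {0}) * B) \ {0} = (A * B) \ {0} := by
  refine (Set.sdiff_subset_sdiff_left (Set.mul_subset_mul_right Set.sdiff_subset)).antisymm ?_
  rintro _ ⟨⟨a, ha, b, hb, rfl⟩, hab⟩
  refine ⟨⟨a, ⟨ha, ?_⟩, b, hb, rfl⟩, hab⟩
  rintro rfl
  exact hab (zero_mul b)

lemma Ideal.not_strictAnti_of_ringKrullDim_ne_top {R : Type*} [CommRing R]
    (hR : ringKrullDim R ≠ ⊤) {f : ℕ → Ideal R} (hf : ∀ m, (f m).IsPrime) : ¬ StrictAnti f :=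
  fun hanti => hR <| by
    let g : ℕ → (PrimeSpectrum R)ᵒᵈ := fun m => OrderDual.toDual ⟨f m, hf m⟩
    have hg : StrictMono g := fun a b hab => hanti hab
    have := Order.krullDim_le_of_strictMono g hg
    rwa [Order.krullDim_nat, Order.krullDim_orderDual, top_le_iff] at this

lemma MvPolynomial.ringKrullDim_ne_top {k σ : Type*} [Field k] [Finite σ] :
    ringKrullDim (MvPolynomial σ k) ≠ ⊤ := by
  rw [ringKrullDim_of_isNoetherianRing, ringKrullDim_eq_zero_of_field, zero_add]
  exact fun h => ENat.natCast_ne_top _ (WithBot.coe_injective h)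

section ZariskiClosure

variable {n : ℕ}

lemma subset_zariskiClosure (S : Set (Fin n → ℂ)) : S ⊆ zariskiClosure S :=
  fun x hx _ hp => hp x hx

lemma zariskiClosure_mono {S T : Set (Fin n → ℂ)} (h : S ⊆ T) :
    zariskiClosure S ⊆ zariskiClosure T :=
  fun _ hx p hp => hx p fun y hy => hp y (h hy)

lemma isZariskiClosed_of_zariskiClosure_subset {S : Set (Fin n → ℂ)}
    (h : zariskiClosure S ⊆ S) : IsZariskiClosed S :=
  h.antisymm (subset_zariskiClosure S)

lemma IsZariskiClosed.zariskiClosure_subset {S C : Set (Fin n → ℂ)} (hC : IsZariskiClosed C)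
    (h : S ⊆ C) : zariskiClosure S ⊆ C :=
  (zariskiClosure_mono h).trans hC.subset

lemma isZariskiClosed_zariskiClosure (S : Set (Fin n → ℂ)) :
    IsZariskiClosed (zariskiClosure S) :=
  isZariskiClosed_of_zariskiClosure_subset fun _ hx p hp => hx p fun _ hy => hy p hp

lemma zariskiClosure_eq_of_subset_of_subset {S T : Set (Fin n → ℂ)} (hST : S ⊆ T)
    (hTS : T ⊆ zariskiClosure S) : zariskiClosure T = zariskiClosure S :=
  ((isZariskiClosed_zariskiClosure S).zariskiClosure_subset hTS).antisymm
    (zariskiClosure_mono hST)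

lemma isZariskiClosed_zero : IsZariskiClosed ({0} : Set (Fin n → ℂ)) :=
  isZariskiClosed_of_zariskiClosure_subset fun _ hx => funext fun i => by
    simpa using hx (X i) (by simp)

lemma isZariskiClosed_setOf_eval_eq_zero (p : MvPolynomial (Fin n) ℂ) :
    IsZariskiClosed {x : Fin n → ℂ | eval x p = 0} :=
  isZariskiClosed_of_zariskiClosure_subset fun _ hx => hx p fun _ hy => hy

lemma IsZariskiClosed.union {C D : Set (Fin n → ℂ)} (hC : IsZariskiClosed C)
    (hD : IsZariskiClosed D) : IsZariskiClosed (C ∪ D) := by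
  refine isZariskiClosed_of_zariskiClosure_subset fun x hx => ?_
  by_contra hxCD
  rw [Set.mem_union, not_or, ← hC, ← hD] at hxCD
  simp only [zariskiClosure, Set.mem_ofPred_eq, not_forall] at hxCD
  obtain ⟨⟨p, hpC, hpx⟩, ⟨q, hqD, hqx⟩⟩ := hxCD
  refine mul_ne_zero hpx hqx ?_
  rw [← map_mul]
  refine hx (p * q) fun y hy => ?_
  rcases hy with hy | hy
  · simp [hpC y hy]
  · simp [hqD y hy]

lemma eval_bind₁_C_mul_X (a x : Fin n → ℂ) (p : MvPolynomial (Fin n) ℂ) :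
    eval x (bind₁ (fun i => C (a i) * X i) p) = eval (a * x) p := by
  rw [eval, eval₂Hom_bind₁]
  congr 2
  funext i
  simp

lemma IsZariskiClosed.preimage_const_mul {D : Set (Fin n → ℂ)} (hD : IsZariskiClosed D)
    (a : Fin n → ℂ) : IsZariskiClosed ((a * ·) ⁻¹' D) := by
  refine isZariskiClosed_of_zariskiClosure_subset fun x hx => ?_
  rw [Set.mem_preimage, ← hD]
  intro p hp
  rw [← eval_bind₁_C_mul_X]
  exact hx _ fun y hy => (eval_bind₁_C_mul_X a y p).trans (hp _ hy)

lemma IsZariskiClosed.setOf_forall_mul_mem {D : Set (Fin n → ℂ)} (hD : IsZariskiClosed D)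
    (A : Set (Fin n → ℂ)) : IsZariskiClosed {b | ∀ a ∈ A, a * b ∈ D} :=
  isZariskiClosed_of_zariskiClosure_subset fun _ hx a ha =>
    (hD.preimage_const_mul a).zariskiClosure_subset (S := {b | ∀ a ∈ A, a * b ∈ D})
      (fun _ hb => hb a ha) hx

lemma zero_mem_zariskiClosure_of_smul_mem {S : Set (Fin n → ℂ)} (x : Fin n → ℂ)
    (hS : ∀ c : ℂ, c ≠ 0 → c • x ∈ S) : (0 : Fin n → ℂ) ∈ zariskiClosure S := by
  intro p hp
  obtain ⟨f, hf⟩ : ∃ f : Polynomial ℂ, ∀ c, f.eval c = eval (c • x) p := by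
    refine ⟨aeval (fun i => Polynomial.C (x i) * Polynomial.X) p, fun c => ?_⟩
    rw [aeval_def, polynomial_eval_eval₂]
    congr 1
    · ext; simp
    · funext i
      rw [Polynomial.eval_mul, Polynomial.eval_C, Polynomial.eval_X, Pi.smul_apply, smul_eq_mul,
        mul_comm]
  have hf0 : f = 0 := Polynomial.eq_zero_of_infinite_isRoot f <|
    (Set.finite_singleton (0 : ℂ)).infinite_compl.mono fun c hc => (hf c).trans (hp _ (hS c hc))
  simpa [hf0] using (hf 0).symm

end ZariskiClosure

section HadamardProduct

variable {n : ℕ}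

lemma hadamardSetProd_eq (A B : Set (Fin n → ℂ)) :
    hadamardSetProd A B = zariskiClosure ((A * B) \ {0}) := by
  unfold hadamardSetProd
  congr 1
  ext z
  constructor
  · rintro ⟨x, hx, y, hy, rfl, hxy⟩
    exact ⟨Set.mul_mem_mul hx hy, hxy⟩
  · rintro ⟨⟨x, hx, y, hy, rfl⟩, hxy⟩
    exact ⟨x, hx, y, hy, rfl, hxy⟩

lemma mul_sdiff_zero_subset_hadamardSetProd (A B : Set (Fin n → ℂ)) :
    (A * B) \ {0} ⊆ hadamardSetProd A B :=
  hadamardSetProd_eq A B ▸ subset_zariskiClosure _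

lemma hadamardSetProd_comm (A B : Set (Fin n → ℂ)) :
    hadamardSetProd A B = hadamardSetProd B A := by
  rw [hadamardSetProd_eq, hadamardSetProd_eq, mul_comm]

lemma zariskiClosure_mul_subset {A B C : Set (Fin n → ℂ)} (hC : IsZariskiClosed C)
    (h : A * B ⊆ C) : zariskiClosure A * B ⊆ C := by
  rintro _ ⟨x, hx, b, hb, rfl⟩
  have hA : A ⊆ (b * ·) ⁻¹' C := fun a ha => by
    rw [Set.mem_preimage, mul_comm]
    exact h (Set.mul_mem_mul ha hb)
  have hxb := (hC.preimage_const_mul b).zariskiClosure_subset hA hx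
  rwa [Set.mem_preimage, mul_comm] at hxb

lemma hadamardSetProd_zariskiClosure_left (A B : Set (Fin n → ℂ)) :
    hadamardSetProd (zariskiClosure A) B = hadamardSetProd A B := by
  rw [hadamardSetProd_eq, hadamardSetProd_eq]
  refine zariskiClosure_eq_of_subset_of_subset
    (Set.sdiff_subset_sdiff_left (Set.mul_subset_mul_right (subset_zariskiClosure A))) ?_
  have hC := (isZariskiClosed_zariskiClosure ((A * B) \ {0})).union isZariskiClosed_zero
  refine fun z hz => ((zariskiClosure_mul_subset hC fun w hw => ?_) hz.1).resolve_right hz.2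
  by_cases hw0 : w = 0
  · exact Or.inr hw0
  · exact Or.inl (subset_zariskiClosure _ ⟨hw, hw0⟩)

lemma hadamardSetProd_zariskiClosure_right (A B : Set (Fin n → ℂ)) :
    hadamardSetProd A (zariskiClosure B) = hadamardSetProd A B := by
  rw [hadamardSetProd_comm, hadamardSetProd_zariskiClosure_left, hadamardSetProd_comm]

lemma hadamardSetProd_assoc (A B C : Set (Fin n → ℂ)) :
    hadamardSetProd A (hadamardSetProd B C) = hadamardSetProd (hadamardSetProd A B) C := by
  rw [hadamardSetProd_eq B C, hadamardSetProd_zariskiClosure_right, hadamardSetProd_eq A B,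
    hadamardSetProd_zariskiClosure_left, hadamardSetProd_eq, hadamardSetProd_eq,
    Set.mul_sdiff_zero_sdiff_zero, Set.sdiff_zero_mul_sdiff_zero, mul_assoc]

lemma hadamardSetProd_subset_of_mul_subset {A B C : Set (Fin n → ℂ)} (hC : IsZariskiClosed C)
    (h : A * B ⊆ C ∪ {0}) : hadamardSetProd A B ⊆ C := by
  rw [hadamardSetProd_eq]
  exact hC.zariskiClosure_subset fun z hz => (h hz.1).resolve_right hz.2

-- The usual proof that `A × B` is irreducible, applied to its image under multiplication:
-- first slice by slice in `A`, then in `B`.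
lemma ZariskiIrreducible.mul_subset_or {A B D₁ D₂ : Set (Fin n → ℂ)}
    (hA : ZariskiIrreducible A) (hB : ZariskiIrreducible B) (hD₁ : IsZariskiClosed D₁)
    (hD₂ : IsZariskiClosed D₂) (h : A * B ⊆ D₁ ∪ D₂) : A * B ⊆ D₁ ∨ A * B ⊆ D₂ := by
  have hslice : ∀ b ∈ B, A ⊆ (b * ·) ⁻¹' D₁ ∨ A ⊆ (b * ·) ⁻¹' D₂ := fun b hb =>
    hA.2 _ _ (hD₁.preimage_const_mul b) (hD₂.preimage_const_mul b) fun a ha => by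
      rw [← Set.preimage_union, Set.mem_preimage, mul_comm]
      exact h (Set.mul_mem_mul ha hb)
  have hcover : B ⊆ {b | ∀ a ∈ A, a * b ∈ D₁} ∪ {b | ∀ a ∈ A, a * b ∈ D₂} := fun b hb =>
    (hslice b hb).imp (fun h a ha => mul_comm b a ▸ h ha) (fun h a ha => mul_comm b a ▸ h ha)
  refine (hB.2 _ _ (hD₁.setOf_forall_mul_mem A) (hD₂.setOf_forall_mul_mem A) hcover).imp ?_ ?_
  all_goals exact fun hBD => Set.mul_subset_iff.2 fun a ha b hb => hBD hb a ha

lemma ZariskiIrreducible.hadamardSetProd {A B : Set (Fin n → ℂ)} (hA : ZariskiIrreducible A)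
    (hB : ZariskiIrreducible B) (hne : ((A * B) \ {0}).Nonempty) :
    ZariskiIrreducible (hadamardSetProd A B) := by
  refine ⟨hne.mono (mul_sdiff_zero_subset_hadamardSetProd A B),
    fun C₁ C₂ hC₁ hC₂ hsub => ?_⟩
  have hcover : A * B ⊆ (C₁ ∪ {0}) ∪ (C₂ ∪ {0}) := fun z hz => by
    by_cases hz0 : z = 0
    · exact Or.inl (Or.inr hz0)
    · rcases hsub (mul_sdiff_zero_subset_hadamardSetProd A B ⟨hz, hz0⟩) with h | h
      exacts [Or.inl (Or.inl h), Or.inr (Or.inl h)]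
  exact (hA.mul_subset_or hB (hC₁.union isZariskiClosed_zero) (hC₂.union isZariskiClosed_zero)
    hcover).imp (hadamardSetProd_subset_of_mul_subset hC₁)
    (hadamardSetProd_subset_of_mul_subset hC₂)

end HadamardProduct

section HadamardPow

variable {n : ℕ} {X : Set (Fin n → ℂ)}

lemma hadamardPow_succ {m : ℕ} (hm : 1 ≤ m) :
    hadamardPow X (m + 1) = hadamardSetProd X (hadamardPow X m) := by
  obtain ⟨k, rfl⟩ := Nat.exists_eq_add_of_le' hm
  rfl

lemma hadamardPow_add {a b : ℕ} (ha : 1 ≤ a) (hb : 1 ≤ b) :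
    hadamardSetProd (hadamardPow X a) (hadamardPow X b) = hadamardPow X (a + b) := by
  induction a, ha using Nat.le_induction with
  | base => rw [add_comm, hadamardPow_succ hb]; rfl
  | succ a ha ih =>
    rw [hadamardPow_succ ha, ← hadamardSetProd_assoc, ih, add_right_comm,
      hadamardPow_succ (by omega)]

lemma hadamardPow_eq_of_succ_eq {m : ℕ} (hm : 1 ≤ m)
    (h : hadamardPow X (m + 1) = hadamardPow X m) {k : ℕ} (hk : m ≤ k) :
    hadamardPow X k = hadamardPow X m := by
  induction k, hk using Nat.le_induction with
  | base => rfl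
  | succ k hk ih => rw [hadamardPow_succ (hm.trans hk), ih, ← hadamardPow_succ hm, h]

lemma hadamardSetProd_hadamardPow_self_of_succ_eq {m : ℕ} (hm : 1 ≤ m)
    (h : hadamardPow X (m + 1) = hadamardPow X m) :
    hadamardSetProd (hadamardPow X m) (hadamardPow X m) = hadamardPow X m := by
  rw [hadamardPow_add hm hm, hadamardPow_eq_of_succ_eq hm h (by omega)]

lemma isZariskiClosed_hadamardPow (hX : IsZariskiClosed X) {m : ℕ} (hm : 1 ≤ m) :
    IsZariskiClosed (hadamardPow X m) := by
  rcases m with _ | _ | m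
  · omega
  · exact hX
  · exact isZariskiClosed_zariskiClosure _

variable [NeZero n]

lemma one_mem_hadamardPow (hone : 1 ∈ X) (m : ℕ) : 1 ∈ hadamardPow X m := by
  induction m with
  | zero => rfl
  | succ m ih =>
    rcases Nat.eq_zero_or_pos m with rfl | hm
    · exact hone
    · rw [hadamardPow_succ hm]
      exact mul_sdiff_zero_subset_hadamardSetProd _ _ ⟨⟨1, hone, 1, ih, mul_one 1⟩, one_ne_zero⟩

lemma hadamardPow_subset_succ (hcone : ∀ c : ℂ, c ≠ 0 → ∀ x ∈ X, c • x ∈ X) (hone : 1 ∈ X)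
    {m : ℕ} (hm : 1 ≤ m) : hadamardPow X m ⊆ hadamardPow X (m + 1) := by
  rw [← hadamardPow_add hm le_rfl, hadamardSetProd_eq]
  intro z hz
  by_cases hz0 : z = 0
  · -- `0` is never one of the products counted by `⋆`; it is reached as a limit of `c • 𝟙`.
    subst hz0
    refine zero_mem_zariskiClosure_of_smul_mem 1 fun c hc => ⟨?_, smul_ne_zero hc one_ne_zero⟩
    exact ⟨1, one_mem_hadamardPow hone m, c • 1, hcone c hc 1 hone, one_mul _⟩
  · exact subset_zariskiClosure _ ⟨⟨z, hz, 1, hone, mul_one z⟩, hz0⟩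

lemma ZariskiIrreducible.hadamardPow (hX : ZariskiIrreducible X) (hone : 1 ∈ X) {m : ℕ}
    (hm : 1 ≤ m) : ZariskiIrreducible (hadamardPow X m) := by
  induction m, hm using Nat.le_induction with
  | base => exact hX
  | succ m hm ih =>
    rw [hadamardPow_succ hm]
    exact hX.hadamardSetProd ih
      ⟨1 * 1, Set.mul_mem_mul hone (one_mem_hadamardPow hone m), by simp⟩

end HadamardPow

section VanishingIdeal

variable {n : ℕ}

lemma zariskiClosure_eq_zeroLocus_vanishingIdeal (S : Set (Fin n → ℂ)) :
    zariskiClosure S = zeroLocus ℂ (vanishingIdeal ℂ S) := by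
  ext
  simp [zariskiClosure]

lemma IsZariskiClosed.eq_of_vanishingIdeal_eq {V W : Set (Fin n → ℂ)} (hV : IsZariskiClosed V)
    (hW : IsZariskiClosed W) (h : vanishingIdeal ℂ V = vanishingIdeal ℂ W) : V = W := by
  rw [← hV, ← hW, zariskiClosure_eq_zeroLocus_vanishingIdeal,
    zariskiClosure_eq_zeroLocus_vanishingIdeal, h]

lemma ZariskiIrreducible.isPrime_vanishingIdeal {V : Set (Fin n → ℂ)}
    (hV : ZariskiIrreducible V) : (vanishingIdeal ℂ V).IsPrime := by
  refine ⟨fun htop => ?_, fun {p q} hpq => ?_⟩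
  · obtain ⟨v, hv⟩ := hV.1
    have h1 : (1 : MvPolynomial (Fin n) ℂ) ∈ vanishingIdeal ℂ V := htop ▸ Submodule.mem_top
    simpa using h1 v hv
  · have hcover : V ⊆ {x | eval x p = 0} ∪ {x | eval x q = 0} := fun x hx => by
      simpa using hpq x hx
    refine (hV.2 _ _ (isZariskiClosed_setOf_eval_eq_zero p)
      (isZariskiClosed_setOf_eval_eq_zero q) hcover).imp ?_ ?_
    all_goals exact fun h x hx => by simpa using h hx
end VanishingIdeal

lemma exists_hadamardPow_succ_eq {n : ℕ} [NeZero n] {X : Set (Fin n → ℂ)}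
    (hclosed : IsZariskiClosed X) (hirr : ZariskiIrreducible X)
    (hcone : ∀ c : ℂ, c ≠ 0 → ∀ x ∈ X, c • x ∈ X) (hone : 1 ∈ X) :
    ∃ m, 1 ≤ m ∧ hadamardPow X (m + 1) = hadamardPow X m := by
  by_contra! hne
  refine Ideal.not_strictAnti_of_ringKrullDim_ne_top MvPolynomial.ringKrullDim_ne_top
    (f := fun m => vanishingIdeal ℂ (hadamardPow X (m + 1)))
    (fun m => (hirr.hadamardPow hone (by omega)).isPrime_vanishingIdeal)
    (strictAnti_nat_of_succ_lt fun m => ?_)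
  refine lt_of_le_of_ne (vanishingIdeal_anti_mono (hadamardPow_subset_succ hcone hone (by omega)))
    fun h => hne (m + 1) (by omega) ?_
  exact (isZariskiClosed_hadamardPow hclosed (by omega)).eq_of_vanishingIdeal_eq
    (isZariskiClosed_hadamardPow hclosed (by omega)) h

/-- Let `X ⊆ ℙ^N` be an irreducible projective variety (affine cone model) none of
whose Hadamard powers equals `ℙ^N`.  If `𝟙 ∈ X`, then there exists `r ≥ 1` such that `X^{⋆r}` is
a proper Hadamard-idempotent subvariety of `ℙ^N`, i.e. `(X^{⋆r})^{⋆2} = X^{⋆r} ≠ ℙ^N`. -/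
theorem exists_hadamard_idempotent_power (N : ℕ) (X : Set (Fin (N + 1) → ℂ))
    (hclosed : IsZariskiClosed X) (hirr : ZariskiIrreducible X)
    (hcone : ∀ c : ℂ, c ≠ 0 → ∀ x ∈ X, c • x ∈ X)
    (hone : (1 : Fin (N + 1) → ℂ) ∈ X)
    (hproper : ∀ m : ℕ, 1 ≤ m → hadamardPow X m ≠ Set.univ) :
    ∃ r : ℕ, 1 ≤ r ∧
      hadamardSetProd (hadamardPow X r) (hadamardPow X r) = hadamardPow X r ∧
      hadamardPow X r ≠ Set.univ := by
  obtain ⟨m, hm, hstable⟩ := exists_hadamardPow_succ_eq hclosed hirr hcone hone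
  exact ⟨m, hm, hadamardSetProd_hadamardPow_self_of_succ_eq hm hstable, hproper m hm⟩
end

section
/- Let f ∈ C[x_1,...,x_N] be an irreducible polynomial, not divisible by any variable, whose Newton polytope is a line segment. Then f is a binomial, i.e., f has exactly two monomials with nonzero coefficients. -/
/-!
The endpoints of the segment are extreme points of the Newton polytope, hence exponents `a`, `b`
of `f`, and every exponent lies on the lattice segment between them. The gcd of the positions of
the exponents along that segment yields an integral step `g = u - w` (with `u`, `w` of disjoint
supports) such that every exponent is `c + k • g` with `k ∈ ℕ`. Hence
`f · x^(m w) = x^c · H(x^u, x^w)`, where `H` is the homogenization of the univariate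
`P = ∑ coeff_α f · t^(k α)` and `m = deg P`. Over `ℂ`, `H` splits into linear forms, so
`f · x^(m w) = x^c · lc(P) · ∏ (x^u - r x^w)` with all roots `r ≠ 0` because `P(0) ≠ 0`. No
variable divides `f` or any factor `x^u - r x^w`, so the monomials cancel and
`f = lc(P) · ∏ (x^u - r x^w)`; the factors are not units, so irreducibility leaves exactly one.
-/

open MvPolynomial

def newtonPolytope {N : ℕ} (f : MvPolynomial (Fin N) ℂ) : Set (Fin N → ℝ) :=
  convexHull ℝ {x : Fin N → ℝ | ∃ α ∈ f.support, x = fun i => (α i : ℝ)}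

section Convex

variable {E : Type*} [AddCommGroup E] [Module ℝ E]

theorem left_mem_extremePoints_segment (a b : E) : a ∈ (segment ℝ a b).extremePoints ℝ := by
  rw [mem_extremePoints_iff_forall_segment]
  refine ⟨left_mem_segment ℝ a b, ?_⟩
  rintro x₁ hx₁ x₂ hx₂ ⟨p, q, hp, hq, hpq, h⟩
  rw [segment_eq_image'] at hx₁ hx₂
  obtain ⟨s, ⟨hs, -⟩, rfl⟩ := hx₁
  obtain ⟨t, ⟨ht, -⟩, rfl⟩ := hx₂
  have key : (p * s + q * t) • (b - a) = 0 := by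
    linear_combination (norm := module) h - hpq • a
  rcases smul_eq_zero.1 key with hpqst | hba
  · have hps : p * s = 0 := by nlinarith [mul_nonneg hp hs, mul_nonneg hq ht]
    rcases mul_eq_zero.1 hps with rfl | rfl
    · right
      have : t = 0 := by nlinarith
      simp [this]
    · left
      simp
  · left
    simp [hba]

theorem mem_of_convexHull_eq_segment {S : Set E} {a b : E}
    (h : convexHull ℝ S = segment ℝ a b) : a ∈ S :=
  extremePoints_convexHull_subset (h ▸ left_mem_extremePoints_segment a b)

end Convex

section Lattice

theorem exists_nsmul_eq_of_collinear {ι σ : Type*} (s : Finset ι) (x : ι → σ → ℤ) {D : σ → ℤ}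
    {i₀ : σ} (hD : D i₀ ≠ 0) (hx : ∀ j ∈ s, ∀ i, x j i * D i₀ = x j i₀ * D i)
    (hx₀ : ∀ j ∈ s, 0 ≤ x j i₀) : ∃ g : σ → ℤ, ∃ k : ι → ℕ, ∀ j ∈ s, x j = k j • g := by
  set e := s.gcd (x · i₀)
  have he : 0 ≤ e := Int.nonneg_of_normalize_eq_self Finset.normalize_gcd
  have hdvd : ∀ i, D i₀ ∣ e * D i := by
    intro i
    have : D i₀ ∣ s.gcd (fun j => x j i₀ * D i) :=
      Finset.dvd_gcd fun j hj => ⟨x j i, by rw [← hx j hj i, mul_comm]⟩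
    rw [Finset.gcd_mul_right] at this
    exact this.trans ((normalize_associated _).mul_left e).dvd
  refine ⟨fun i => e * D i / D i₀, fun j => (x j i₀ / e).toNat, fun j hj => funext fun i => ?_⟩
  rw [Pi.smul_apply, nsmul_eq_mul, Int.toNat_of_nonneg (Int.ediv_nonneg (hx₀ j hj) he)]
  apply mul_right_cancel₀ hD
  calc x j i * D i₀ = x j i₀ * D i := hx j hj i
    _ = x j i₀ / e * (e * D i) := by
      rw [← mul_assoc, Int.ediv_mul_cancel (Finset.gcd_dvd (f := (x · i₀)) hj)]
    _ = x j i₀ / e * (e * D i / D i₀) * D i₀ := by rw [mul_assoc, Int.ediv_mul_cancel (hdvd i)]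

theorem sub_mul_sub_eq_of_mem_segment {σ : Type*} {a b x : σ → ℝ} (h : x ∈ segment ℝ a b)
    (i j : σ) : (x i - a i) * (b j - a j) = (x j - a j) * (b i - a i) := by
  rw [segment_eq_image'] at h
  obtain ⟨t, -, rfl⟩ := h
  simp only [Pi.add_apply, Pi.smul_apply, Pi.sub_apply, smul_eq_mul]
  ring

theorem le_of_mem_segment_of_le {σ : Type*} {a b x : σ → ℝ} (h : x ∈ segment ℝ a b) {j : σ}
    (hj : a j ≤ b j) : a j ≤ x j := by
  rw [segment_eq_image'] at h
  obtain ⟨t, ⟨ht, -⟩, rfl⟩ := h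
  simpa using mul_nonneg ht (sub_nonneg.2 hj)

theorem Finsupp.exists_sub_eq_of_finite {σ : Type*} [Finite σ] (g : σ → ℤ) :
    ∃ u w : σ →₀ ℕ, (∀ i, (u i : ℤ) - w i = g i) ∧ ∀ i, u i = 0 ∨ w i = 0 :=
  ⟨equivFunOnFinite.symm fun i => (g i).toNat, equivFunOnFinite.symm fun i => (-g i).toNat,
    fun i => by simp, fun i => by simp only [equivFunOnFinite_symm_apply_apply]; omega⟩

variable {σ : Type*} [Finite σ] {s : Finset (σ →₀ ℕ)} {a b : σ →₀ ℕ}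

theorem exists_line_parametrization_of_lt (hb : b ∈ s) {i₀ : σ} (hab : a i₀ < b i₀)
    (hs : ∀ α ∈ s, (fun i => (α i : ℝ)) ∈ segment ℝ (fun i => (a i : ℝ)) (fun i => (b i : ℝ))) :
    ∃ u w : σ →₀ ℕ, ∃ k : (σ →₀ ℕ) → ℕ,
      u ≠ w ∧ (∀ i, u i = 0 ∨ w i = 0) ∧ ∀ α ∈ s, α + k α • w = a + k α • u := by
  have hcross : ∀ α ∈ s, ∀ i,
      ((α i : ℤ) - a i) * ((b i₀ : ℤ) - a i₀) = ((α i₀ : ℤ) - a i₀) * ((b i : ℤ) - a i) :=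
    fun α hα i => by exact_mod_cast sub_mul_sub_eq_of_mem_segment (hs α hα) i i₀
  have hx₀ : ∀ α ∈ s, (0 : ℤ) ≤ (α i₀ : ℤ) - a i₀ := fun α hα => by
    have : (a i₀ : ℝ) ≤ α i₀ := le_of_mem_segment_of_le (hs α hα) (by exact_mod_cast hab.le)
    have : a i₀ ≤ α i₀ := by exact_mod_cast this
    omega
  obtain ⟨g, k, hk⟩ := exists_nsmul_eq_of_collinear s (fun α i => (α i : ℤ) - a i)
    (D := fun i => (b i : ℤ) - a i) (by omega) hcross hx₀
  obtain ⟨u, w, hg, hdisj⟩ := Finsupp.exists_sub_eq_of_finite g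
  refine ⟨u, w, k, ?_, hdisj, fun α hα => Finsupp.ext fun i => ?_⟩
  · rintro rfl
    have := congrFun (hk b hb) i₀
    simp only [Pi.smul_apply, ← hg i₀, sub_self, nsmul_zero] at this
    omega
  · have hα := congrFun (hk α hα) i
    simp only [Pi.smul_apply, nsmul_eq_mul] at hα
    have : (α i : ℤ) + k α * w i = a i + k α * u i := by
      linear_combination hα - (k α : ℤ) * hg i
    simp only [Finsupp.add_apply, Finsupp.smul_apply, smul_eq_mul]
    exact_mod_cast this

theorem exists_line_parametrization (ha : a ∈ s) (hb : b ∈ s) (hab : a ≠ b)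
    (hs : ∀ α ∈ s, (fun i => (α i : ℝ)) ∈ segment ℝ (fun i => (a i : ℝ)) (fun i => (b i : ℝ))) :
    ∃ c ∈ s, ∃ u w : σ →₀ ℕ, ∃ k : (σ →₀ ℕ) → ℕ,
      u ≠ w ∧ (∀ i, u i = 0 ∨ w i = 0) ∧ ∀ α ∈ s, α + k α • w = c + k α • u := by
  obtain ⟨i, hi⟩ := Finsupp.ne_iff.1 hab
  rcases hi.lt_or_gt with h | h
  · exact ⟨a, ha, exists_line_parametrization_of_lt hb h hs⟩
  · refine ⟨b, hb, exists_line_parametrization_of_lt ha h fun α hα => ?_⟩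
    rw [segment_symm]
    exact hs α hα

end Lattice

theorem Multiset.card_eq_one_of_irreducible_mul_prod {M : Type*} [CommMonoid M] {a : M}
    {s : Multiset M} (ha : IsUnit a) (hs : ∀ x ∈ s, ¬IsUnit x) (h : Irreducible (a * s.prod)) :
    Multiset.card s = 1 := by
  rw [irreducible_isUnit_mul ha] at h
  induction s using Multiset.induction_on with
  | empty => exact absurd (by simp) h.not_isUnit
  | cons x t _ =>
    rw [Multiset.prod_cons] at h
    have ht : IsUnit t.prod := (h.isUnit_or_isUnit rfl).resolve_left (hs x (t.mem_cons_self x))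
    have : t = 0 := Multiset.eq_zero_of_forall_notMem fun y hy =>
      hs y (Multiset.mem_cons_of_mem hy) (IsUnit.multisetProd_iff.1 ht y hy)
    simp [this]

namespace Polynomial

variable {K S : Type*} [Field K] [CommRing S] [Algebra K S]

theorem aeval_homogenize_prod_X_sub_C (s : Multiset K) (A B : S) :
    MvPolynomial.aeval ![A, B] ((s.map fun r => X - C r).prod.homogenize (Multiset.card s)) =
      (s.map fun r => A - algebraMap K S r * B).prod := by
  induction s using Multiset.induction_on with
  | empty => simp
  | cons r s ih =>
    rw [Multiset.map_cons, Multiset.prod_cons, Multiset.card_cons, add_comm,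
      homogenize_mul _ _ (natDegree_X_sub_C_le r) (natDegree_multiset_prod_X_sub_C_eq_card s).le,
      map_mul, ih]
    simp

theorem aeval_homogenize_eq_prod_roots {P : K[X]} (hP : Multiset.card P.roots = P.natDegree)
    (A B : S) :
    MvPolynomial.aeval ![A, B] (P.homogenize P.natDegree) =
      algebraMap K S P.leadingCoeff * (P.roots.map fun r => A - algebraMap K S r * B).prod := by
  rw [← hP]
  nth_rewrite 1 [← C_leadingCoeff_mul_prod_multiset_X_sub_C hP]
  rw [homogenize_C_mul, map_mul, aeval_homogenize_prod_X_sub_C]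
  simp

end Polynomial

namespace MvPolynomial

section Domain

variable {σ R : Type*} [CommRing R] [IsDomain R]

theorem le_of_monomial_one_dvd_monomial_one_mul {s t : σ →₀ ℕ} {q : MvPolynomial σ R}
    (hq : ∀ i, ¬X i ∣ q) (h : monomial s (1 : R) ∣ monomial t 1 * q) : s ≤ t := by
  intro i
  have hXs : (X i : MvPolynomial σ R) ^ s i ∣ monomial s 1 := by
    rw [X_pow_eq_monomial, monomial_one_dvd_monomial_one, Finsupp.single_le_iff]
  have := X_prime.pow_dvd_of_dvd_mul_right _ (hq i) (hXs.trans h)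
  rwa [X_pow_eq_monomial, monomial_one_dvd_monomial_one, Finsupp.single_le_iff] at this

theorem eq_of_mul_monomial_eq_monomial_mul {p q : MvPolynomial σ R} {s t : σ →₀ ℕ}
    (hp : ∀ i, ¬X i ∣ p) (hq : ∀ i, ¬X i ∣ q) (h : p * monomial t 1 = monomial s 1 * q) :
    p = q := by
  have hst : s ≤ t := le_of_monomial_one_dvd_monomial_one_mul hp
    (by rw [mul_comm, h]; exact dvd_mul_right _ _)
  have hts : t ≤ s := le_of_monomial_one_dvd_monomial_one_mul hq
    (by rw [← h, mul_comm]; exact dvd_mul_right _ _)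
  rw [le_antisymm hst hts, mul_comm] at h
  exact mul_left_cancel₀ (monomial_eq_zero.not.2 one_ne_zero) h

end Domain

section Field

variable {σ K : Type*} [Field K] {u w : σ →₀ ℕ}

theorem card_support_monomial_sub_monomial {a b : K} (huw : u ≠ w) (ha : a ≠ 0) (hb : b ≠ 0) :
    (monomial u a - monomial w b).support.card = 2 := by
  classical
  rw [sub_eq_add_neg, ← map_neg, ← Finset.card_pair huw]
  exact congrArg Finset.card (Finsupp.support_single_add_single huw ha (neg_ne_zero.2 hb))

theorem not_isUnit_monomial_sub_monomial {r : K} (huw : u ≠ w) (hr : r ≠ 0) :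
    ¬IsUnit (monomial u 1 - monomial w r) := by
  rw [isUnit_iff_eq_C_of_isReduced]
  rintro ⟨c, -, hc⟩
  have : (C c : MvPolynomial σ K).support.card ≤ 1 := by
    simpa using Finset.card_le_card (support_monomial_subset (s := 0) (a := c))
  rw [← hc, card_support_monomial_sub_monomial huw one_ne_zero hr] at this
  omega

theorem not_X_dvd_monomial_sub_monomial {r : K} {i : σ} (huw : u ≠ w) (hr : r ≠ 0)
    (hi : u i = 0 ∨ w i = 0) : ¬X i ∣ monomial u 1 - monomial w r := by
  classical
  rintro ⟨q, hq⟩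
  have hcoeff : ∀ v : σ →₀ ℕ, v i = 0 → coeff v (monomial u 1 - monomial w r) = 0 := by
    intro v hv
    rw [hq, coeff_X_mul', if_neg (by simpa using hv)]
  rcases hi with hu | hw
  · simpa [coeff_monomial, huw.symm] using hcoeff u hu
  · simpa [coeff_monomial, huw, hr] using hcoeff w hw

end Field

section LinePolynomial

variable {σ R : Type*} [CommRing R] {f : MvPolynomial σ R} {k : (σ →₀ ℕ) → ℕ} {c u w : σ →₀ ℕ}

/-- If every exponent `α` of `f` satisfies `α + k α • w = c + k α • u`, then
`f = x^c · P(x^u / x^w)` for `P = f.linePolynomial k`. -/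
noncomputable def linePolynomial (f : MvPolynomial σ R) (k : (σ →₀ ℕ) → ℕ) : Polynomial R :=
  ∑ α ∈ f.support, Polynomial.monomial (k α) (coeff α f)

theorem coeff_linePolynomial {β : σ →₀ ℕ} (hk : ∀ α ∈ f.support, α + k α • w = c + k α • u)
    (hβ : β ∈ f.support) : (linePolynomial f k).coeff (k β) = coeff β f := by
  classical
  rw [linePolynomial, Polynomial.finsetSum_coeff, Finset.sum_eq_single β]
  · simp
  · intro α hα hne
    rw [Polynomial.coeff_monomial, if_neg]
    intro hkk
    exact hne (add_right_cancel ((hk α hα).trans (hkk ▸ (hk β hβ).symm)))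
  · exact fun h => absurd hβ h

theorem monomial_mul_aeval_homogenize_linePolynomial {m : ℕ}
    (hk : ∀ α ∈ f.support, k α ≤ m ∧ α + k α • w = c + k α • u) :
    monomial c 1 * aeval ![monomial u 1, monomial w 1] ((linePolynomial f k).homogenize m) =
      f * monomial (m • w) 1 := by
  rw [linePolynomial, Polynomial.homogenize_finsetSum, map_sum, Finset.mul_sum]
  conv_rhs => rw [f.as_sum, Finset.sum_mul]
  refine Finset.sum_congr rfl fun α hα => ?_
  obtain ⟨hkm, hα⟩ := hk α hα
  rw [Polynomial.homogenize_monomial hkm, aeval_monomial]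
  simp only [algebraMap_eq, Finsupp.prod_fintype _ _ fun _ => pow_zero _, Fin.prod_univ_two,
    Matrix.cons_val_zero, Matrix.cons_val_one, Fin.isValue, monomial_pow, one_pow, monomial_mul,
    mul_one, Finsupp.coe_update, Function.update_self, Finsupp.single_eq_same,
    Function.update_of_ne zero_ne_one]
  have hexp : c + (k α • u + (m - k α) • w) = α + m • w := by
    rw [← add_assoc, ← hα, add_assoc, ← add_smul, Nat.add_sub_cancel' hkm]
  rw [C_mul_monomial, mul_one, monomial_mul, one_mul, hexp]

theorem coeff_zero_linePolynomial_ne_zero (hk : ∀ α ∈ f.support, α + k α • w = c + k α • u)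
    (hc : c ∈ f.support) (huw : u ≠ w) : (linePolynomial f k).coeff 0 ≠ 0 := by
  have hkc : k c = 0 := by
    by_contra h
    exact huw (smul_right_injective _ h (add_left_cancel (hk c hc)).symm)
  rw [← hkc, coeff_linePolynomial hk hc]
  exact mem_support_iff.1 hc

end LinePolynomial

section IsAlgClosed

variable {σ K : Type*} [Field K] [IsAlgClosed K] {f : MvPolynomial σ K} {k : (σ →₀ ℕ) → ℕ}
  {c u w : σ →₀ ℕ}

theorem mul_monomial_eq_monomial_mul_prod_roots
    (hk : ∀ α ∈ f.support, α + k α • w = c + k α • u) :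
    f * monomial ((linePolynomial f k).natDegree • w) 1 =
      monomial c 1 * (C (linePolynomial f k).leadingCoeff *
        ((linePolynomial f k).roots.map fun r => monomial u 1 - monomial w r).prod) := by
  have hdeg : ∀ α ∈ f.support, k α ≤ (linePolynomial f k).natDegree := fun α hα =>
    Polynomial.le_natDegree_of_ne_zero <| (coeff_linePolynomial hk hα).trans_ne <|
      mem_support_iff.1 hα
  rw [← monomial_mul_aeval_homogenize_linePolynomial fun α hα => ⟨hdeg α hα, hk α hα⟩,
    Polynomial.aeval_homogenize_eq_prod_roots IsAlgClosed.card_roots_eq_natDegree]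
  simp only [algebraMap_eq, C_mul_monomial, mul_one]

theorem card_support_eq_two_of_irreducible (hirr : Irreducible f) (hvar : ∀ i, ¬X i ∣ f)
    (hc : c ∈ f.support) (huw : u ≠ w) (hdisj : ∀ i, u i = 0 ∨ w i = 0)
    (hk : ∀ α ∈ f.support, α + k α • w = c + k α • u) :
    f.support.card = 2 := by
  set P := linePolynomial f k
  have hP0 : P.coeff 0 ≠ 0 := coeff_zero_linePolynomial_ne_zero hk hc huw
  have hroots : ∀ r ∈ P.roots, r ≠ 0 := by
    rintro r hr rfl
    exact hP0 <| by
      simpa [Polynomial.coeff_zero_eq_eval_zero] using Polynomial.isRoot_of_mem_roots hr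
  have hlc0 : P.leadingCoeff ≠ 0 := Polynomial.leadingCoeff_ne_zero.2 fun h => hP0 (by simp [h])
  have hlc : IsUnit (C P.leadingCoeff : MvPolynomial σ K) := hlc0.isUnit.map C
  set Q := (P.roots.map fun r => monomial u (1 : K) - monomial w r).prod
  have hQ : ∀ i, ¬X i ∣ C P.leadingCoeff * Q := by
    intro i h
    obtain ⟨r, hr, hdvd⟩ := X_prime.exists_mem_multiset_map_dvd (hlc.dvd_mul_left.1 h)
    exact not_X_dvd_monomial_sub_monomial huw (hroots r hr) (hdisj i) hdvd
  have hfQ : f = C P.leadingCoeff * Q :=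
    eq_of_mul_monomial_eq_monomial_mul hvar hQ (mul_monomial_eq_monomial_mul_prod_roots hk)
  have hcard : Multiset.card P.roots = 1 := by
    simpa [Q] using Multiset.card_eq_one_of_irreducible_mul_prod hlc
      (Multiset.forall_mem_map_iff.2 fun r hr => not_isUnit_monomial_sub_monomial huw (hroots r hr))
      (hfQ ▸ hirr)
  obtain ⟨r, hr⟩ := Multiset.card_eq_one.1 hcard
  rw [hfQ]
  simp only [Q, hr, Multiset.map_singleton, Multiset.prod_singleton, mul_sub, C_mul_monomial,
    mul_one]
  exact card_support_monomial_sub_monomial huw hlc0 (mul_ne_zero hlc0 (hroots r (by simp [hr])))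

end IsAlgClosed

end MvPolynomial

/-- Let `f ∈ ℂ[x_1,…,x_N]` be an irreducible polynomial, not divisible by any
variable, whose Newton polytope is a line segment.  Then `f` is a binomial: it has exactly two
monomials with nonzero coefficient. -/
theorem irreducible_segment_newton_is_binomial (N : ℕ) (f : MvPolynomial (Fin N) ℂ)
    (hirr : Irreducible f)
    (hvar : ∀ i : Fin N, ¬ (X i ∣ f))
    (hseg : ∃ a b : Fin N → ℝ, a ≠ b ∧ newtonPolytope f = segment ℝ a b) :
    f.support.card = 2 := by
  obtain ⟨p, q, hpq, hseg⟩ := hseg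
  obtain ⟨a, ha, rfl⟩ := mem_of_convexHull_eq_segment hseg
  obtain ⟨b, hb, rfl⟩ := mem_of_convexHull_eq_segment (hseg.trans (segment_symm ℝ _ _))
  have hs : ∀ α ∈ f.support,
      (fun i => (α i : ℝ)) ∈ segment ℝ (fun i => (a i : ℝ)) (fun i => (b i : ℝ)) :=
    fun α hα => hseg ▸ subset_convexHull ℝ _ ⟨α, hα, rfl⟩
  obtain ⟨c, hc, u, w, k, huw, hdisj, hk⟩ :=
    exists_line_parametrization ha hb (by rintro rfl; exact hpq rfl) hs
  exact card_support_eq_two_of_irreducible hirr hvar hc huw hdisj hk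
end

section
/- Let f ∈ C[x_1,...,x_N] be an irreducible polynomial whose support is not contained in a line, i.e., there exist exponents α_i, α_j, α_k of monomials of f such that α_i - α_j and α_i - α_k are linearly independent. Then the tropical hypersurface Trop Z(f) spans R^N as a linear space, i.e., the linear span of Trop Z(f) equals R^N. -/
/-!
If the span were proper, a nonzero linear form `ℓ` would vanish on `Trop Z(f)`. The open
half-space `{ℓ > 0}` is connected and misses `Trop Z(f)`, so one exponent `α` attains
`min_γ γ · u` at every point of it. Each form `u ↦ (γ - α) · u` is then nonnegative on `{ℓ > 0}`,
hence a multiple of `ℓ`; so all differences of exponents of `f` are parallel, and the support lies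
on a line.
-/

open MvPolynomial

/-- Pairing of an exponent vector with a point of `ℝ^N`. -/
def expDot {N : ℕ} (α : Fin N →₀ ℕ) (u : Fin N → ℝ) : ℝ :=
  ∑ i, (α i : ℝ) * u i

/-- The tropical hypersurface of `f`: the set of `u ∈ ℝ^N` at which the minimum of `α · u` over
the exponents `α` in the support of `f` is attained at least twice. -/
def tropHypersurface {N : ℕ} (f : MvPolynomial (Fin N) ℂ) : Set (Fin N → ℝ) :=
  {u | ∃ α ∈ f.support, ∃ β ∈ f.support, α ≠ β ∧ expDot α u = expDot β u ∧
    ∀ γ ∈ f.support, expDot α u ≤ expDot γ u}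

section HalfSpace

variable {K V : Type*} [Field K] [LinearOrder K] [IsStrictOrderedRing K]
  [AddCommGroup V] [Module K V]

/-- Along a line parallel to `ker ℓ` inside `{ℓ > 0}`, `φ` is affine and bounded below, hence
constant. -/
theorem LinearMap.ker_le_ker_of_nonneg_of_pos {ℓ φ : V →ₗ[K] K} (hℓ : ℓ ≠ 0)
    (h : ∀ v, 0 < ℓ v → 0 ≤ φ v) : LinearMap.ker ℓ ≤ LinearMap.ker φ := by
  intro v hv
  rw [LinearMap.mem_ker] at hv ⊢
  by_contra hφv
  obtain ⟨x₀, hx₀⟩ := LinearMap.surjective_of_ne_zero hℓ 1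
  set t := -(φ x₀ + 1) / φ v
  have hpos : 0 < ℓ (x₀ + t • v) := by simp [hx₀, hv]
  have hnonneg := h _ hpos
  rw [map_add, map_smul, smul_eq_mul, div_mul_cancel₀ _ hφv] at hnonneg
  linarith

theorem LinearMap.mem_span_singleton_of_nonneg_of_pos {ℓ φ : V →ₗ[K] K} (hℓ : ℓ ≠ 0)
    (h : ∀ v, 0 < ℓ v → 0 ≤ φ v) : φ ∈ K ∙ ℓ := by
  simpa using mem_span_of_iInf_ker_le_ker (L := fun _ : Unit => ℓ)
    (by simpa using LinearMap.ker_le_ker_of_nonneg_of_pos hℓ h)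

end HalfSpace

theorem not_linearIndependent_pair_of_map_mem_span_singleton {K M M' : Type*} [Field K]
    [AddCommGroup M] [Module K M] [AddCommGroup M'] [Module K M'] {g : M →ₗ[K] M'}
    (hg : Function.Injective g) {x y : M} {v : M'} (hx : g x ∈ K ∙ v) (hy : g y ∈ K ∙ v) :
    ¬ LinearIndependent K ![x, y] := by
  obtain ⟨a, ha⟩ := Submodule.mem_span_singleton.1 hx
  obtain ⟨b, hb⟩ := Submodule.mem_span_singleton.1 hy
  intro hli
  have hdep : b • x + (-a) • y = 0 := hg <| by
    simp [← ha, ← hb, smul_smul, mul_comm]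
  obtain ⟨rfl, ha0⟩ := LinearIndependent.pair_iff.1 hli b (-a) hdep
  rw [neg_eq_zero.1 ha0, zero_smul, ← map_zero g] at ha
  exact hli.ne_zero 0 (hg ha.symm)

theorem continuous_expDot {N : ℕ} (α : Fin N →₀ ℕ) : Continuous (expDot α) := by
  unfold expDot
  fun_prop

def expVec {N : ℕ} (α : Fin N →₀ ℕ) : Fin N → ℝ :=
  fun i => α i

theorem expDot_eq_dotProduct {N : ℕ} (α : Fin N →₀ ℕ) (u : Fin N → ℝ) :
    expDot α u = expVec α ⬝ᵥ u :=
  rfl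

def minLocus {N : ℕ} (f : MvPolynomial (Fin N) ℂ) (α : Fin N →₀ ℕ) : Set (Fin N → ℝ) :=
  {u | ∀ γ ∈ f.support, expDot α u ≤ expDot γ u}

section MinLocus

variable {N : ℕ} {f : MvPolynomial (Fin N) ℂ} {α β : Fin N →₀ ℕ}

theorem isClosed_minLocus (f : MvPolynomial (Fin N) ℂ) (α : Fin N →₀ ℕ) :
    IsClosed (minLocus f α) := by
  simp only [minLocus, Set.ofPred_forall]
  exact isClosed_biInter fun γ _ => isClosed_le (continuous_expDot α) (continuous_expDot γ)

theorem exists_mem_minLocus (hf : f.support.Nonempty) (u : Fin N → ℝ) :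
    ∃ α ∈ f.support, u ∈ minLocus f α :=
  f.support.exists_min_image (fun γ => expDot γ u) hf

theorem minLocus_inter_minLocus_subset (hα : α ∈ f.support) (hβ : β ∈ f.support)
    (hαβ : α ≠ β) : minLocus f α ∩ minLocus f β ⊆ tropHypersurface f :=
  fun _ ⟨hu, hv⟩ => ⟨α, hα, β, hβ, hαβ, le_antisymm (hu β hβ) (hv α hα), hu⟩

/-- The min loci are closed and meet only on the tropical hypersurface, so a connected set
avoiding it lies in a single one of them. -/
theorem IsPreconnected.subset_minLocus {C : Set (Fin N → ℝ)} (hC : IsPreconnected C)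
    (hdisj : Disjoint C (tropHypersurface f)) (hα : α ∈ f.support) {u₀ : Fin N → ℝ}
    (hu₀C : u₀ ∈ C) (hu₀ : u₀ ∈ minLocus f α) : C ⊆ minLocus f α := by
  set others := ⋃ β ∈ f.support.erase α, minLocus f β
  have hcover : C ⊆ minLocus f α ∪ others := by
    intro u _
    obtain ⟨β, hβ, hu⟩ := exists_mem_minLocus ⟨α, hα⟩ u
    by_cases hβα : β = α
    · exact Or.inl (hβα ▸ hu)
    · exact Or.inr (Set.mem_biUnion (Finset.mem_erase.2 ⟨hβα, hβ⟩) hu)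
  have hsep : C ∩ (minLocus f α ∩ others) = ∅ := by
    refine Set.eq_empty_of_forall_notMem fun u ⟨huC, huα, hu⟩ => ?_
    obtain ⟨β, hβ, huβ⟩ := Set.mem_iUnion₂.1 hu
    exact Set.disjoint_left.1 hdisj huC <| minLocus_inter_minLocus_subset hα
      (Finset.mem_of_mem_erase hβ) (Finset.ne_of_mem_erase hβ).symm ⟨huα, huβ⟩
  have hothers : IsClosed others := isClosed_biUnion_finset fun β _ => isClosed_minLocus f β
  refine (isPreconnected_iff_subset_of_disjoint_closed.1 hC _ _ (isClosed_minLocus f α) hothers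
    hcover hsep).resolve_right fun h => ?_
  exact (Set.eq_empty_iff_forall_notMem.1 hsep) u₀ ⟨hu₀C, hu₀, h hu₀C⟩

end MinLocus

theorem tropHypersurface_spans_general (N : ℕ) (f : MvPolynomial (Fin N) ℂ)
    (hnotline : ∃ αi ∈ f.support, ∃ αj ∈ f.support, ∃ αk ∈ f.support,
      LinearIndependent ℝ
        ![(fun i => (αi i : ℝ) - (αj i : ℝ)), (fun i => (αi i : ℝ) - (αk i : ℝ))]) :
    Submodule.span ℝ (tropHypersurface f) = ⊤ := by
  obtain ⟨αi, hi, αj, hj, αk, hk, hli⟩ := hnotline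
  by_contra hspan
  obtain ⟨ℓ, hℓ, htrop⟩ := (Submodule.span ℝ (tropHypersurface f)).exists_le_ker_of_lt_top
    (lt_top_iff_ne_top.2 hspan)
  obtain ⟨u₀, hu₀⟩ := LinearMap.surjective_of_ne_zero hℓ 1
  obtain ⟨α, hα, hαu₀⟩ := exists_mem_minLocus ⟨αi, hi⟩ u₀
  have hdisj : Disjoint {u | 0 < ℓ u} (tropHypersurface f) :=
    Set.disjoint_left.2 fun u hu htu => hu.ne' (htrop (Submodule.subset_span htu))
  have hhalf : {u | 0 < ℓ u} ⊆ minLocus f α :=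
    (convex_halfSpace_gt ℓ.isLinear 0).isPreconnected.subset_minLocus hdisj hα
      (by simp [hu₀]) hαu₀
  have hform : ∀ γ ∈ f.support,
      dotProductEquiv ℝ (Fin N) (expVec γ - expVec α) ∈ ℝ ∙ ℓ := fun γ hγ =>
    LinearMap.mem_span_singleton_of_nonneg_of_pos hℓ fun u hu => by
      simpa [sub_dotProduct, ← expDot_eq_dotProduct] using hhalf hu γ hγ
  refine not_linearIndependent_pair_of_map_mem_span_singleton
    (dotProductEquiv ℝ (Fin N)).injective (v := ℓ) ?_ ?_ hli
  · have h := sub_mem (hform αi hi) (hform αj hj)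
    rwa [← map_sub, sub_sub_sub_cancel_right] at h
  · have h := sub_mem (hform αi hi) (hform αk hk)
    rwa [← map_sub, sub_sub_sub_cancel_right] at h

/-- Let `f ∈ ℂ[x_1,…,x_N]` be an irreducible polynomial whose support is not
contained in a line, i.e. there are exponents `αᵢ, αⱼ, αₖ` of monomials of `f` with `αᵢ - αⱼ`
and `αᵢ - αₖ` linearly independent.  Then the tropical hypersurface `Trop Z(f)` spans `ℝ^N`:
its linear span is all of `ℝ^N`. -/
theorem tropHypersurface_spans (N : ℕ) (f : MvPolynomial (Fin N) ℂ)
    (hirr : Irreducible f)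
    (hnotline : ∃ αi ∈ f.support, ∃ αj ∈ f.support, ∃ αk ∈ f.support,
      LinearIndependent ℝ
        ![(fun i => (αi i : ℝ) - (αj i : ℝ)), (fun i => (αi i : ℝ) - (αk i : ℝ))]) :
    Submodule.span ℝ (tropHypersurface f) = ⊤ :=
  tropHypersurface_spans_general N f hnotline
end

section
/- Let Q ⊂ P^2 be the conic defined by x_0 x_1 + x_0 x_2 + x_1 x_2 = 0. Then for any a, b ∈ C with ab ≠ 0, the point (a : b : 0) cannot be written as the Hadamard product of two points on Q; that is, there exist no points (x_0:x_1:x_2), (y_0:y_1:y_2) ∈ Q with (x_0 y_0 : x_1 y_1 : x_2 y_2) = (a : b : 0). -/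
/-! If the third coordinate of `x ⋆ y` vanishes, then `x₂ = 0` or `y₂ = 0`; on `Q` that forces
`x₀x₁ = 0` or `y₀y₁ = 0`, so one of the first two coordinates of `x ⋆ y` vanishes as well. -/

section Conic

variable {R : Type*} [CommRing R] {x₀ x₁ x₂ y₀ y₁ y₂ : R}

theorem mul_eq_zero_of_conic_of_eq_zero (hx : x₀ * x₁ + x₀ * x₂ + x₁ * x₂ = 0) (h₂ : x₂ = 0) :
    x₀ * x₁ = 0 := by
  simpa [h₂] using hx

theorem hadamard_conic_mul_eq_zero [NoZeroDivisors R]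
    (hx : x₀ * x₁ + x₀ * x₂ + x₁ * x₂ = 0) (hy : y₀ * y₁ + y₀ * y₂ + y₁ * y₂ = 0)
    (h₂ : x₂ * y₂ = 0) : x₀ * y₀ * (x₁ * y₁) = 0 := by
  calc x₀ * y₀ * (x₁ * y₁) = x₀ * x₁ * (y₀ * y₁) := by ring
    _ = 0 := by
      rcases mul_eq_zero.mp h₂ with h | h
      · rw [mul_eq_zero_of_conic_of_eq_zero hx h, zero_mul]
      · rw [mul_eq_zero_of_conic_of_eq_zero hy h, mul_zero]

end Conic

/-- Let `Q ⊂ ℙ²` be the conic `x₀x₁ + x₀x₂ + x₁x₂ = 0`.  For any `a, b ∈ ℂ` with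
`ab ≠ 0`, the point `(a : b : 0)` is not the Hadamard product of two points of `Q`: there are
no points `(x₀:x₁:x₂), (y₀:y₁:y₂) ∈ Q` with `(x₀y₀ : x₁y₁ : x₂y₂) = (a : b : 0)`. -/
theorem conic_hadamard_product_misses_boundary (a b : ℂ) (ha : a ≠ 0) (hb : b ≠ 0) :
    ¬ ∃ x₀ x₁ x₂ y₀ y₁ y₂ c : ℂ,
      ¬ (x₀ = 0 ∧ x₁ = 0 ∧ x₂ = 0) ∧
      ¬ (y₀ = 0 ∧ y₁ = 0 ∧ y₂ = 0) ∧
      x₀ * x₁ + x₀ * x₂ + x₁ * x₂ = 0 ∧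
      y₀ * y₁ + y₀ * y₂ + y₁ * y₂ = 0 ∧
      c ≠ 0 ∧ x₀ * y₀ = c * a ∧ x₁ * y₁ = c * b ∧ x₂ * y₂ = c * 0 := by
  rintro ⟨x₀, x₁, x₂, y₀, y₁, y₂, c, -, -, hx, hy, hc, h₀, h₁, h₂⟩
  have hprod := hadamard_conic_mul_eq_zero hx hy (h₂.trans (mul_zero c))
  rw [h₀, h₁] at hprod
  exact mul_ne_zero (mul_ne_zero hc ha) (mul_ne_zero hc hb) hprod
end

section
/- Every tensor T ∈ C^{n_1+1} ⊗ ... ⊗ C^{n_k+1} is the Hadamard (entrywise) product of finitely many tensors of tensor rank at most 2. Explicitly, with v_{i_2,...,i_k} := (t_{0,i_2,...,i_k},...,t_{n_1,i_2,...,i_k}) ∈ C^{n_1+1}, one has T = ⋆_{i_2,...,i_k}[(v_{i_2,...,i_k} - 𝟙) ⊗ e_{i_2} ⊗ ... ⊗ e_{i_k} + 𝟙 ⊗ ... ⊗ 𝟙], where the Hadamard product runs over all (i_2,...,i_k) ∈ [n_2] × ... × [n_k]. -/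
/-- Every tensor `T ∈ ℂ^{n₁+1} ⊗ ⋯ ⊗ ℂ^{n_k+1}` (modeled as
`T : (Π j, Fin (n j + 1)) → ℂ` with `k+1` factors, the first one distinguished) is the Hadamard
(entrywise) product over all multi-indices `m = (i₂,…,i_k)` of the tensors
`(v_m - 𝟙) ⊗ e_{i₂} ⊗ ⋯ ⊗ e_{i_k} + 𝟙 ⊗ ⋯ ⊗ 𝟙`, where
`v_m = (t_{0,m}, …, t_{n₁,m})`; moreover each such factor is a sum of two decomposable
tensors, hence has tensor rank at most 2. -/
theorem tensor_hadamard_rank_two_decomposition (k : ℕ) (n : Fin (k + 1) → ℕ)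
    (T : ((j : Fin (k + 1)) → Fin (n j + 1)) → ℂ) :
    (T = fun i => ∏ m : ((j : Fin k) → Fin (n j.succ + 1)),
        ((T (Fin.cons (i 0) m) - 1) *
          (∏ j : Fin k, if i j.succ = m j then (1 : ℂ) else 0) + 1)) ∧
    (∀ m : ((j : Fin k) → Fin (n j.succ + 1)),
      ∃ u v : (j : Fin (k + 1)) → (Fin (n j + 1) → ℂ),
        (fun i : (j : Fin (k + 1)) → Fin (n j + 1) =>
            (T (Fin.cons (i 0) m) - 1) *
              (∏ j : Fin k, if i j.succ = m j then (1 : ℂ) else 0) + 1)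
          = fun i => (∏ j, u j (i j)) + (∏ j, v j (i j))) := by
  constructor
  · funext i
    rw [Finset.prod_eq_single (Fin.tail i)]
    · have h1 : (∏ j : Fin k, if i j.succ = Fin.tail i j then (1 : ℂ) else 0) = 1 := by
        apply Finset.prod_eq_one
        intro j _
        simp [Fin.tail]
      rw [h1, Fin.cons_self_tail]
      ring
    · intro m _ hm
      have : ∃ j : Fin k, Fin.tail i j ≠ m j := by
        by_contra h
        push_neg at h
        exact hm (funext fun j => (h j).symm)
      obtain ⟨j, hj⟩ := this
      have h0 : (∏ j' : Fin k, if i j'.succ = m j' then (1 : ℂ) else 0) = 0 := by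
        apply Finset.prod_eq_zero (Finset.mem_univ j)
        simp [Fin.tail] at hj ⊢
        exact hj
      rw [h0]; ring
    · intro h; exact absurd (Finset.mem_univ _) h
  · intro m
    refine ⟨Fin.cons (fun a => T (Fin.cons a m) - 1)
        (fun j b => if b = m j then (1 : ℂ) else 0),
      fun _ _ => 1, ?_⟩
    funext i
    have h1 : (∏ j : Fin (k + 1), (1 : ℂ)) = 1 := Finset.prod_const_one
    rw [h1]
    congr 1
    rw [Fin.prod_univ_succ]
    simp [Fin.cons]
end

section
/- Let L ⊂ P^N (over C) be a projective line such that every point of L has at least N coordinates nonzero (i.e., L does not meet the locus of points with two or more zero coordinates). If a projective variety X ⊆ P^N contains L, then every point p ∈ P^N has finite X-Hadamard rank; in fact Hrk_X(p) ≤ N. -/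
open Finset Polynomial

lemma aux_prod_dite (d m : ℕ) (g : ℕ → ℂ) (cst : ℂ) :
    (∏ i ∈ Finset.range (d + m), if _ : i < d then g i else cst)
      = (∏ i ∈ Finset.range d, g i) * cst ^ m := by
  rw [Finset.prod_range_add]
  congr 1
  · exact Finset.prod_congr rfl fun i hi => dif_pos (Finset.mem_range.mp hi)
  · rw [Finset.prod_congr rfl fun i _ => dif_neg (by omega : ¬ (d + i < d)),
      Finset.prod_const, Finset.card_range]

lemma aux_prod_getD (l : List ℂ) (G : ℂ → ℂ) :
    ∏ i ∈ Finset.range l.length, G (l.getD i 0) = (l.map G).prod := by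
  induction l with
  | nil => simp
  | cons x xs ih =>
    rw [List.length_cons, Finset.prod_range_succ']
    simp only [List.getD_cons_succ, List.getD_cons_zero, List.map_cons, List.prod_cons, ih]
    exact mul_comm _ _

lemma aux_prod_map_const_mul (l : List ℂ) (c : ℂ) (G : ℂ → ℂ) :
    (l.map fun u => c * G u).prod = c ^ l.length * (l.map G).prod := by
  induction l with
  | nil => simp
  | cons x xs ih =>
    simp only [List.map_cons, List.prod_cons, List.length_cons, ih, pow_succ]
    ring


/-- `p` is the Hadamard product of exactly `r` points of `X` (as projective points, i.e. up to a
nonzero scalar in the affine cone model). -/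
def HadamardDecomp {n : ℕ} (X : Set (Fin n → ℂ)) (p : Fin n → ℂ) (r : ℕ) : Prop :=
  ∃ q : Fin r → (Fin n → ℂ), (∀ i, q i ∈ X) ∧
    ∃ c : ℂ, c ≠ 0 ∧ p = c • fun j => ∏ i, q i j

/-- The Hadamard rank of `p` with respect to `X` is at most `m`: `p` is the Hadamard product of
`r` points of `X` for some `1 ≤ r ≤ m`. -/
def HadamardRankLE {n : ℕ} (X : Set (Fin n → ℂ)) (p : Fin n → ℂ) (m : ℕ) : Prop :=
  ∃ r : ℕ, 1 ≤ r ∧ r ≤ m ∧ HadamardDecomp X p r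


set_option maxHeartbeats 1000000 in
/-- Let `L ⊂ ℙ^N` be a projective line (the nonzero vectors of a 2-dimensional
subspace `W` of `ℂ^{N+1}`) such that every point of `L` has at least `N` nonzero coordinates,
i.e. no point of `L` has two zero coordinates.  If a projective variety `X ⊆ ℙ^N` contains `L`,
then every point `p ∈ ℙ^N` has finite `X`-Hadamard rank; in fact `Hrk_X(p) ≤ N`. -/
theorem line_in_variety_finite_hadamard_rank (N : ℕ) (X : Set (Fin (N + 1) → ℂ))
    (hclosed : IsZariskiClosed X) (hcone : ∀ c : ℂ, c ≠ 0 → ∀ x ∈ X, c • x ∈ X)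
    (W : Submodule ℂ (Fin (N + 1) → ℂ)) (hW : Module.finrank ℂ W = 2)
    (hLzeros : ∀ x : Fin (N + 1) → ℂ, x ∈ W → x ≠ 0 →
      ∀ i j : Fin (N + 1), i ≠ j → (x i ≠ 0 ∨ x j ≠ 0))
    (hLX : {x : Fin (N + 1) → ℂ | x ∈ W ∧ x ≠ 0} ⊆ X) :
    ∀ p : Fin (N + 1) → ℂ, p ≠ 0 → HadamardRankLE X p N := by
  intro p hp
  -- N ≥ 1
  have hN : 1 ≤ N := by
    have h1 : Module.finrank ℂ W ≤ Module.finrank ℂ (Fin (N + 1) → ℂ) := W.finrank_le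
    rw [hW, Module.finrank_fin_fun] at h1
    omega
  have hnt : Nontrivial (Fin (N + 1)) := Fin.nontrivial_iff_two_le.mpr (by omega)
  -- for every coordinate k there is a nonzero element of W vanishing at k
  have hker : ∀ k : Fin (N + 1), ∃ x : Fin (N + 1) → ℂ, x ∈ W ∧ x ≠ 0 ∧ x k = 0 := by
    intro k
    set f : W →ₗ[ℂ] ℂ := (LinearMap.proj k).comp W.subtype with hf
    have hrk : Module.finrank ℂ (LinearMap.range f) + Module.finrank ℂ (LinearMap.ker f)
        = Module.finrank ℂ W := LinearMap.finrank_range_add_finrank_ker f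
    have hr1 : Module.finrank ℂ (LinearMap.range f) ≤ 1 := by
      have := (LinearMap.range f).finrank_le
      simpa using this
    have hk1 : 1 ≤ Module.finrank ℂ (LinearMap.ker f) := by omega
    have hne : LinearMap.ker f ≠ ⊥ := by
      intro h
      rw [h, finrank_bot] at hk1; omega
    obtain ⟨y, hy, hy0⟩ := Submodule.exists_mem_ne_zero_of_ne_bot hne
    refine ⟨(y : Fin (N + 1) → ℂ), y.2, ?_, ?_⟩
    · simpa using hy0
    · simpa [hf] using (LinearMap.mem_ker.mp hy)
  -- basis of W
  obtain B := Module.finBasisOfFinrankEq ℂ W hW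
  set e₀ : Fin (N + 1) → ℂ := (B 0 : Fin (N + 1) → ℂ) with he₀
  set e₁ : Fin (N + 1) → ℂ := (B 1 : Fin (N + 1) → ℂ) with he₁
  have he₀W : e₀ ∈ W := (B 0).2
  have he₁W : e₁ ∈ W := (B 1).2
  -- no coordinate kills both basis vectors
  have hnotboth : ∀ j : Fin (N + 1), e₀ j ≠ 0 ∨ e₁ j ≠ 0 := by
    intro j
    by_contra h
    push_neg at h
    obtain ⟨h0, h1⟩ := h
    have hall : ∀ y : W, (y : Fin (N + 1) → ℂ) j = 0 := by
      intro y
      have hy := congrArg (fun z : W => (z : Fin (N + 1) → ℂ) j) (B.sum_repr y)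
      simp only [Fin.sum_univ_two, Submodule.coe_add, Submodule.coe_smul, Pi.add_apply,
        Pi.smul_apply, smul_eq_mul] at hy
      rw [← hy, ← he₀, ← he₁, h0, h1, mul_zero, mul_zero, add_zero]
    obtain ⟨k, hk⟩ := exists_ne j
    obtain ⟨x, hxW, hx0, hxk⟩ := hker k
    have hxj : x j = 0 := hall ⟨x, hxW⟩
    rcases hLzeros x hxW hx0 j k (Ne.symm hk) with h | h
    · exact h hxj
    · exact h hxk
  -- find b ∈ W with all coordinates nonzero
  have hbex : ∃ t : ℂ, ∀ j, e₀ j + t * e₁ j ≠ 0 := by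
    have hfin : (⋃ j : Fin (N + 1), {t : ℂ | e₀ j + t * e₁ j = 0}).Finite := by
      refine Set.finite_iUnion fun j => ?_
      rcases eq_or_ne (e₁ j) 0 with h1 | h1
      · rcases hnotboth j with h0 | h0
        · convert Set.finite_empty
          ext t
          simp [h1, h0]
        · exact absurd h1 h0
      · apply Set.Finite.subset (Set.finite_singleton (-(e₀ j) / e₁ j))
        intro t ht
        simp only [Set.mem_setOf_eq] at ht
        simp only [Set.mem_singleton_iff]
        field_simp
        linear_combination ht
    obtain ⟨t, ht⟩ := hfin.infinite_compl.nonempty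
    refine ⟨t, fun j h => ht ?_⟩
    exact Set.mem_iUnion.mpr ⟨j, h⟩
  obtain ⟨t, ht⟩ := hbex
  obtain ⟨b, hbW, hbne⟩ : ∃ b : Fin (N + 1) → ℂ, b ∈ W ∧ ∀ j, b j ≠ 0 :=
    ⟨e₀ + t • e₁, W.add_mem he₀W (W.smul_mem t he₁W),
      fun j => by simpa using ht j⟩
  have hb0 : b ≠ 0 := fun h => hbne 0 (by rw [h]; rfl)
  -- find a ∈ W independent from b
  have haex : ∃ a : Fin (N + 1) → ℂ, a ∈ W ∧ a ∉ Submodule.span ℂ {b} := by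
    by_contra h
    push_neg at h
    have hle : W ≤ Submodule.span ℂ {b} := fun x hx => h x hx
    have := Submodule.finrank_mono hle
    rw [hW, finrank_span_singleton hb0] at this
    omega
  obtain ⟨a, haW, haspan⟩ := haex
  have hainde : ∀ u : ℂ, a + u • b ≠ 0 := by
    intro u h
    apply haspan
    refine Submodule.mem_span_singleton.mpr ⟨-u, ?_⟩
    rw [neg_smul]
    exact (eq_neg_of_add_eq_zero_left h).symm
  set w : Fin (N + 1) → ℂ := fun j => -(a j / b j) with hwdef
  have hwinj : Function.Injective w := by
    intro j k hjk
    by_contra hne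
    have hrel : a j * b k = a k * b j := by
      have h1 : a j / b j = a k / b k := by
        have h2 : -(a j / b j) = -(a k / b k) := hjk
        exact neg_injective h2
      field_simp [hbne j, hbne k] at h1
      linear_combination h1
    set x : Fin (N + 1) → ℂ := b k • a - a k • b with hx
    have hxW : x ∈ W := W.sub_mem (W.smul_mem _ haW) (W.smul_mem _ hbW)
    have hxj : x j = 0 := by
      simp only [hx, Pi.sub_apply, Pi.smul_apply, smul_eq_mul]
      linear_combination hrel
    have hxk : x k = 0 := by
      simp only [hx, Pi.sub_apply, Pi.smul_apply, smul_eq_mul]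
      ring
    have hx0 : x ≠ 0 := by
      intro h
      apply haspan
      have heq : b k • a = a k • b := by
        have := sub_eq_zero.mp h
        exact this
      refine Submodule.mem_span_singleton.mpr ⟨(b k)⁻¹ * a k, ?_⟩
      rw [mul_smul, ← heq, inv_smul_smul₀ (hbne k)]
    rcases hLzeros x hxW hx0 j k hne with h | h
    · exact h hxj
    · exact h hxk
  set v : Fin (N + 1) → ℂ := fun j => p j * ((b j)⁻¹) ^ N with hvdef
  set Q : Polynomial ℂ := Lagrange.interpolate Finset.univ w v with hQdef
  have hQeval : ∀ j, Q.eval (w j) = v j := fun j =>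
    Lagrange.eval_interpolate_at_node v hwinj.injOn (Finset.mem_univ j)
  have hvne : ∃ j, v j ≠ 0 := by
    obtain ⟨j, hj⟩ := Function.ne_iff.mp hp
    exact ⟨j, mul_ne_zero (by simpa using hj) (pow_ne_zero _ (inv_ne_zero (hbne j)))⟩
  have hQ0 : Q ≠ 0 := by
    obtain ⟨j, hj⟩ := hvne
    intro h
    apply hj
    rw [← hQeval j, h, Polynomial.eval_zero]
  set d := Q.natDegree with hd
  have hdN : d ≤ N := by
    have h1 : Q.degree < ((N + 1 : ℕ) : WithBot ℕ) := by
      have h0 := Lagrange.degree_interpolate_lt (s := Finset.univ) v hwinj.injOn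
      rw [← hQdef] at h0
      simpa only [Finset.card_univ, Fintype.card_fin] using h0
    have h2 := (Polynomial.natDegree_lt_iff_degree_lt hQ0).mpr h1
    omega
  have hcard : Multiset.card Q.roots = d := by
    rw [hd]
    exact Polynomial.splits_iff_card_roots.mp (IsAlgClosed.splits Q)
  set l : List ℂ := Q.roots.toList with hl
  have hlen : l.length = d := by rw [hl, Multiset.length_toList, hcard]
  set c : ℂ := Q.leadingCoeff * (-1) ^ d with hc
  have hc0 : c ≠ 0 :=
    mul_ne_zero (Polynomial.leadingCoeff_ne_zero.mpr hQ0) (pow_ne_zero _ (by norm_num))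
  set Qf : ℕ → (Fin (N + 1) → ℂ) := fun i => if _ : i < d then a + l.getD i 0 • b else b
    with hQf
  have hQfW : ∀ i, Qf i ∈ W ∧ Qf i ≠ 0 := by
    intro i
    simp only [hQf]
    by_cases h : i < d
    · rw [dif_pos h]; exact ⟨W.add_mem haW (W.smul_mem _ hbW), hainde _⟩
    · rw [dif_neg h]; exact ⟨hbW, hb0⟩
  refine ⟨N, hN, le_refl N, fun i : Fin N => Qf (i : ℕ),
    fun i => hLX ⟨(hQfW _).1, (hQfW _).2⟩, c, hc0, ?_⟩
  funext j
  simp only [Pi.smul_apply, smul_eq_mul]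
  -- the key product computation at coordinate j
  have hS : Q.leadingCoeff * (Q.roots.map fun u => w j - u).prod = v j := by
    have h := congrArg (Polynomial.eval (w j))
      (Polynomial.C_leadingCoeff_mul_prod_multiset_X_sub_C hcard)
    rw [hQeval j] at h
    simpa [Polynomial.eval_multiset_prod, Multiset.map_map, Function.comp] using h
  have hcoord : ∀ i : ℕ, Qf i j = if _ : i < d then (a j + l.getD i 0 * b j) else b j := by
    intro i
    simp only [hQf]
    by_cases h : i < d
    · rw [dif_pos h, dif_pos h]; simp
    · rw [dif_neg h, dif_neg h]
  have hfac : (fun u : ℂ => a j + u * b j) = fun u => (-(b j)) * (w j - u) := by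
    funext u
    have hwj : w j = -(a j / b j) := rfl
    rw [hwj]
    field_simp [hbne j]
    ring
  have key : (∏ i : Fin N, Qf (i : ℕ) j)
      = (-(b j)) ^ d * (Q.roots.map fun u => w j - u).prod * (b j) ^ (N - d) := by
    calc (∏ i : Fin N, Qf (i : ℕ) j) = ∏ i ∈ Finset.range N, Qf i j :=
          Fin.prod_univ_eq_prod_range (fun i => Qf i j) N
      _ = ∏ i ∈ Finset.range (d + (N - d)),
            (if _ : i < d then (a j + l.getD i 0 * b j) else b j) := by
          rw [Nat.add_sub_cancel' hdN]
          exact Finset.prod_congr rfl fun i _ => hcoord i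
      _ = (∏ i ∈ Finset.range d, (a j + l.getD i 0 * b j)) * (b j) ^ (N - d) :=
          aux_prod_dite d (N - d) _ _
      _ = ((l.map fun u => a j + u * b j).prod) * (b j) ^ (N - d) := by
          rw [← hlen, aux_prod_getD l (fun u => a j + u * b j)]
      _ = (-(b j)) ^ d * (Q.roots.map fun u => w j - u).prod * (b j) ^ (N - d) := by
          rw [hfac, aux_prod_map_const_mul l (-(b j)) (fun u => w j - u), hlen]
          congr 1
          rw [hl, ← Multiset.prod_coe, ← Multiset.map_coe, Multiset.coe_toList]
  rw [key, hc]
  have h2 : ((-1 : ℂ)) ^ d * ((-1 : ℂ)) ^ d = 1 := by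
    rw [← mul_pow]; norm_num
  have hbN : (b j) ^ d * (b j) ^ (N - d) = (b j) ^ N := by
    rw [← pow_add, Nat.add_sub_cancel' hdN]
  have hpj : p j = v j * (b j) ^ N := by
    simp only [hvdef]
    rw [mul_assoc, ← mul_pow, inv_mul_cancel₀ (hbne j), one_pow, mul_one]
  rw [hpj, ← hS, ← hbN]
  rw [show (-(b j)) ^ d = ((-1 : ℂ)) ^ d * (b j) ^ d from neg_pow _ _]
  linear_combination (-(Q.leadingCoeff * (Multiset.map (fun u => w j - u) Q.roots).prod
    * (b j) ^ d * (b j) ^ (N - d))) * h2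
end
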